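/- arXiv:2401.05592 — 5 statements merged into one kernel-verified Lean document; each statement's English description precedes it below -/
import Mathlib

section
/- Let G = (X ⊔ Y, E) be a bipartite graph with a matroid structure M_Y on Y. Suppose G is disconnected as G = G1 ⊔ G2 with vertex sets X_i ⊔ Y_i, and suppose M_Y = M_{Y1} ⊕ M_{Y2} where M_{Yi} is the restriction of M_Y to Y_i. Then the Rado matroid of (G, M_Y) on ground set X equals the direct sum of the Rado matroids of (G1, M_{Y1}) and (G2, M_{Y2}). -/
open Finset

/-- A matroid on a finite ground set, presented by its rank function. -/
structure RankMatroid (α : Type*) [DecidableEq α] [Fintype α] where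
  rk : Finset α → ℕ
  rk_empty : rk ∅ = 0
  rk_le_insert : ∀ (A : Finset α) (x : α), rk A ≤ rk (insert x A)
  insert_le : ∀ (A : Finset α) (x : α), rk (insert x A) ≤ rk A + 1
  submodular : ∀ A B : Finset α, rk (A ∪ B) + rk (A ∩ B) ≤ rk A + rk B

variable {X Y : Type*} [Fintype X] [Fintype Y] [DecidableEq X] [DecidableEq Y]

/-- The neighborhood in `Y` of a set `U ⊆ X` in the bipartite graph with
adjacency relation `adj`. -/
def nbhd (adj : X → Y → Prop) [∀ x y, Decidable (adj x y)] (U : Finset X) : Finset Y :=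
  Finset.univ.filter fun y => ∃ x ∈ U, adj x y

/-- Rado independence: `A ⊆ X` is independent in the Rado matroid of
`(G, M_Y)` iff `|U| ≤ rk_{M_Y}(N(U))` for every `U ⊆ A`. -/
def RadoIndep (adj : X → Y → Prop) [∀ x y, Decidable (adj x y)] (MY : RankMatroid Y)
    (A : Finset X) : Prop :=
  ∀ U ⊆ A, U.card ≤ MY.rk (nbhd adj U)

/-- if the bipartite graph is disconnected as `G = G1 ⊔ G2`
(with vertex sets `X1 ⊔ Y1` and its complement), and the matroid `M_Y` is the
direct sum of its restrictions to `Y1` and `Y \ Y1` (rank additivity), then the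
Rado matroid of `(G, M_Y)` is the direct sum of the Rado matroids of
`(G1, M_{Y1})` and `(G2, M_{Y2})`: a set is independent iff its `X1`-part and
its `X2`-part are independent. -/
theorem rado_matroid_of_disconnected_graph
    (adj : X → Y → Prop) [∀ x y, Decidable (adj x y)] (MY : RankMatroid Y)
    (X1 : Finset X) (Y1 : Finset Y)
    (hsep : ∀ x y, adj x y → (x ∈ X1 ↔ y ∈ Y1))
    (hsum : ∀ S : Finset Y, MY.rk S = MY.rk (S ∩ Y1) + MY.rk (S \ Y1)) :
    ∀ A : Finset X,
      RadoIndep adj MY A ↔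
        RadoIndep adj MY (A ∩ X1) ∧ RadoIndep adj MY (A \ X1) := by
  intro A
  have hinter : ∀ U : Finset X, nbhd adj U ∩ Y1 = nbhd adj (U ∩ X1) := by
    intro U
    ext y
    simp only [nbhd, mem_inter, mem_filter, mem_univ, true_and]
    constructor
    · rintro ⟨⟨x, hxU, hadj⟩, hy⟩
      exact ⟨x, ⟨hxU, (hsep x y hadj).2 hy⟩, hadj⟩
    · rintro ⟨x, ⟨hxU, hx1⟩, hadj⟩
      exact ⟨⟨x, hxU, hadj⟩, (hsep x y hadj).1 hx1⟩
  have hdiff : ∀ U : Finset X, nbhd adj U \ Y1 = nbhd adj (U \ X1) := by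
    intro U
    ext y
    simp only [nbhd, mem_sdiff, mem_filter, mem_univ, true_and]
    constructor
    · rintro ⟨⟨x, hxU, hadj⟩, hy⟩
      exact ⟨x, ⟨hxU, fun hx1 => hy ((hsep x y hadj).1 hx1)⟩, hadj⟩
    · rintro ⟨x, ⟨hxU, hx1⟩, hadj⟩
      exact ⟨⟨x, hxU, hadj⟩, fun hy => hx1 ((hsep x y hadj).2 hy)⟩
  constructor
  · intro h
    exact ⟨fun U hU => h U (hU.trans (inter_subset_left)),
           fun U hU => h U (hU.trans (sdiff_subset))⟩
  · rintro ⟨h1, h2⟩ U hU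
    have e1 := h1 (U ∩ X1) (inter_subset_inter_right hU)
    have e2 := h2 (U \ X1) (sdiff_subset_sdiff hU le_rfl)
    rw [← hinter U] at e1
    rw [← hdiff U] at e2
    calc U.card = (U ∩ X1).card + (U \ X1).card := by
          rw [card_inter_add_card_sdiff]
      _ ≤ MY.rk (nbhd adj U ∩ Y1) + MY.rk (nbhd adj U \ Y1) := Nat.add_le_add e1 e2
      _ = MY.rk (nbhd adj U) := (hsum _).symm
end

section
/- Let G = (X ⊔ Y, E) be a bipartite graph and suppose X = X1 ⊔ X2 is a partition such that the neighborhoods N(X1) and N(X2) in Y are disjoint, with the matroid M_Y on Y being the direct sum of its restrictions to N(X1) and N(X2) (plus loops elsewhere). Then the Rado matroid of (G, M_Y) restricted to X is the direct sum of the Rado matroids obtained by restricting to (X1, N(X1)) and (X2, N(X2)). -/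
open Finset

variable {X Y : Type*} [Fintype X] [Fintype Y] [DecidableEq X] [DecidableEq Y]

lemma rk_mono {α : Type*} [DecidableEq α] [Fintype α] (M : RankMatroid α)
    {A B : Finset α} (h : A ⊆ B) : M.rk A ≤ M.rk B := by
  have key : ∀ C : Finset α, M.rk A ≤ M.rk (A ∪ C) := by
    intro C
    induction C using Finset.induction_on with
    | empty => simp
    | @insert a s hx ih =>
      calc M.rk A ≤ M.rk (A ∪ s) := ih
        _ ≤ M.rk (insert a (A ∪ s)) := M.rk_le_insert _ _
        _ = M.rk (A ∪ insert a s) := by rw [Finset.union_insert]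
  have := key B
  rwa [Finset.union_eq_right.mpr h] at this

lemma nbhd_mono (adj : X → Y → Prop) [∀ x y, Decidable (adj x y)]
    {U V : Finset X} (h : U ⊆ V) : nbhd adj U ⊆ nbhd adj V := by
  intro y hy
  simp only [nbhd, Finset.mem_filter, Finset.mem_univ, true_and] at hy ⊢
  obtain ⟨x, hx, hxy⟩ := hy
  exact ⟨x, h hx, hxy⟩

/-- if `X = X1 ⊔ X2` is a partition with disjoint neighborhoods
`N(X1)` and `N(X2)` in `Y`, and `M_Y` is the direct sum of its restrictions to
`N(X1)` and `N(X2)` (plus loops elsewhere), expressed by rank additivity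
`rk S = rk (S ∩ N(X1)) + rk (S ∩ N(X2))`, then the Rado matroid on `X` is the
direct sum of the Rado matroids on `(X1, N(X1))` and `(X2, N(X2))`: a set is
independent iff its `X1`-part and its `X2`-part are independent. -/
theorem rado_matroid_of_disjoint_neighbourhoods
    (adj : X → Y → Prop) [∀ x y, Decidable (adj x y)] (MY : RankMatroid Y)
    (X1 : Finset X)
    (hdisj : Disjoint (nbhd adj X1) (nbhd adj (Finset.univ \ X1)))
    (hsum : ∀ S : Finset Y,
      MY.rk S = MY.rk (S ∩ nbhd adj X1) + MY.rk (S ∩ nbhd adj (Finset.univ \ X1))) :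
    ∀ A : Finset X,
      RadoIndep adj MY A ↔
        RadoIndep adj MY (A ∩ X1) ∧ RadoIndep adj MY (A \ X1) := by
  intro A
  constructor
  · intro hA
    exact ⟨fun U hU => hA U (hU.trans Finset.inter_subset_left),
           fun U hU => hA U (hU.trans (Finset.sdiff_subset))⟩
  · rintro ⟨h1, h2⟩ U hU
    have hc : U.card = (U ∩ X1).card + (U \ X1).card :=
      (Finset.card_inter_add_card_sdiff U X1).symm
    have e1 : U ∩ X1 ⊆ A ∩ X1 := Finset.inter_subset_inter hU (subset_refl _)
    have e2 : U \ X1 ⊆ A \ X1 := Finset.sdiff_subset_sdiff hU (subset_refl _)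
    have r1 : (U ∩ X1).card ≤ MY.rk (nbhd adj (U ∩ X1)) := h1 _ e1
    have r2 : (U \ X1).card ≤ MY.rk (nbhd adj (U \ X1)) := h2 _ e2
    have s1 : nbhd adj (U ∩ X1) ⊆ nbhd adj U ∩ nbhd adj X1 :=
      Finset.subset_inter (nbhd_mono adj Finset.inter_subset_left)
        (nbhd_mono adj Finset.inter_subset_right)
    have s2 : nbhd adj (U \ X1) ⊆ nbhd adj U ∩ nbhd adj (Finset.univ \ X1) :=
      Finset.subset_inter (nbhd_mono adj Finset.sdiff_subset)
        (nbhd_mono adj (Finset.sdiff_subset_sdiff (Finset.subset_univ U) (subset_refl _)))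
    calc U.card = (U ∩ X1).card + (U \ X1).card := hc
      _ ≤ MY.rk (nbhd adj U ∩ nbhd adj X1) + MY.rk (nbhd adj U ∩ nbhd adj (Finset.univ \ X1)) :=
          Nat.add_le_add (r1.trans (rk_mono MY s1)) (r2.trans (rk_mono MY s2))
      _ = MY.rk (nbhd adj U) := (hsum _).symm
end

section
/- Let W be a capacity-ranked generalized Wilson loop diagram in which every vertex supports at least one propagator end, and let F be a connected dependent flat of M(W) of rank strictly less than rk(M(W)). Then there exists a propagator q with c_F(q) < c(q). -/
open Finset

variable {n : ℕ} [NeZero n] {E P : Type*} [Fintype E] [DecidableEq E]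
  [Fintype P] [DecidableEq P]

/-- The set of ends of a generalized Wilson loop diagram supported on the
vertex set `U ⊆ [n]`. -/
def Ends (supp : E → Finset (Fin n)) (U : Finset (Fin n)) : Finset E :=
  Finset.univ.filter fun e => (supp e ∩ U).Nonempty

/-- The capacity (rank in the ends matroid `⊕_p U(c(p), |E(p)|)`) of a set of
ends `S`. -/
def capRank (prop : E → P) (c : P → ℕ) (S : Finset E) : ℕ :=
  ∑ p : P, min (S.filter fun e => prop e = p).card (c p)

/-- Rado independence for the generalized Wilson loop diagram: `V ⊆ [n]` is
independent in `M(W)` iff `|U| ≤ c(End(U))` for every `U ⊆ V`. -/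
def IndepW (prop : E → P) (c : P → ℕ) (supp : E → Finset (Fin n))
    (V : Finset (Fin n)) : Prop :=
  ∀ U ∈ V.powerset, U.card ≤ capRank prop c (Ends supp U)

instance (prop : E → P) (c : P → ℕ) (supp : E → Finset (Fin n)) :
    DecidablePred (IndepW prop c supp) := fun V =>
  inferInstanceAs (Decidable (∀ U ∈ V.powerset, U.card ≤ capRank prop c (Ends supp U)))

/-- The rank function of `M(W)`: the size of a largest independent subset. -/
def rkW (prop : E → P) (c : P → ℕ) (supp : E → Finset (Fin n))
    (V : Finset (Fin n)) : ℕ :=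
  (V.powerset.filter fun T => IndepW prop c supp T).sup Finset.card

/-- A flat of `M(W)`. -/
def FlatW (prop : E → P) (c : P → ℕ) (supp : E → Finset (Fin n))
    (F : Finset (Fin n)) : Prop :=
  ∀ v ∉ F, rkW prop c supp (insert v F) ≠ rkW prop c supp F

/-- A circuit of `M(W)`: a minimal dependent set. -/
def CircuitW (prop : E → P) (c : P → ℕ) (supp : E → Finset (Fin n))
    (C : Finset (Fin n)) : Prop :=
  ¬ IndepW prop c supp C ∧ ∀ v ∈ C, IndepW prop c supp (C.erase v)

/-- A cyclic flat of `M(W)`: a flat that is a union of circuits. -/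
def CyclicFlatW (prop : E → P) (c : P → ℕ) (supp : E → Finset (Fin n))
    (F : Finset (Fin n)) : Prop :=
  FlatW prop c supp F ∧ ∀ v ∈ F, ∃ C ⊆ F, CircuitW prop c supp C ∧ v ∈ C

/-- Connectivity of the restriction `M(W)|F`: no partition of `F` into two
nonempty parts on which the rank is additive. -/
def ConnectedOnW (prop : E → P) (c : P → ℕ) (supp : E → Finset (Fin n))
    (F : Finset (Fin n)) : Prop :=
  ∀ F₁ ⊆ F, F₁.Nonempty → (F \ F₁).Nonempty →
    rkW prop c supp F₁ + rkW prop c supp (F \ F₁) ≠ rkW prop c supp F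

section QFaux
set_option linter.unusedSectionVars false

variable {n : ℕ} [NeZero n] {E P : Type*} [Fintype E] [DecidableEq E]
  [Fintype P] [DecidableEq P]
variable (prop : E → P) (c : P → ℕ) (supp : E → Finset (Fin n))

lemma ends_mono' {A B : Finset (Fin n)} (h : A ⊆ B) : Ends supp A ⊆ Ends supp B := by
  intro e he
  simp only [Ends, mem_filter, mem_univ, true_and] at he ⊢
  exact he.mono (inter_subset_inter (le_refl _) h)

lemma ends_union' (A B : Finset (Fin n)) :
    Ends supp (A ∪ B) = Ends supp A ∪ Ends supp B := by
  ext e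
  simp only [Ends, mem_filter, mem_univ, true_and, mem_union]
  constructor
  · rintro ⟨x, hx⟩
    rw [mem_inter, mem_union] at hx
    rcases hx.2 with h | h
    · exact Or.inl ⟨x, mem_inter.2 ⟨hx.1, h⟩⟩
    · exact Or.inr ⟨x, mem_inter.2 ⟨hx.1, h⟩⟩
  · rintro (⟨x, hx⟩ | ⟨x, hx⟩) <;> rw [mem_inter] at hx
    · exact ⟨x, mem_inter.2 ⟨hx.1, mem_union_left _ hx.2⟩⟩
    · exact ⟨x, mem_inter.2 ⟨hx.1, mem_union_right _ hx.2⟩⟩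

lemma capRank_mono' {S S' : Finset E} (h : S ⊆ S') :
    capRank prop c S ≤ capRank prop c S' := by
  apply Finset.sum_le_sum
  intro p _
  exact min_le_min (Finset.card_le_card (filter_subset_filter _ h)) le_rfl

lemma capRank_submod' (S S' : Finset E) :
    capRank prop c (S ∪ S') + capRank prop c (S ∩ S') ≤
      capRank prop c S + capRank prop c S' := by
  rw [capRank, capRank, capRank, capRank, ← Finset.sum_add_distrib,
    ← Finset.sum_add_distrib]
  apply Finset.sum_le_sum
  intro p _
  have h1 : ((S ∪ S').filter fun e => prop e = p) =
      (S.filter fun e => prop e = p) ∪ (S'.filter fun e => prop e = p) :=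
    Finset.filter_union _ _ _
  have h2 : ((S ∩ S').filter fun e => prop e = p) =
      (S.filter fun e => prop e = p) ∩ (S'.filter fun e => prop e = p) := by
    ext e; simp only [mem_filter, mem_inter]; tauto
  rw [h1, h2]
  have hcard := Finset.card_union_add_card_inter
    (S.filter fun e => prop e = p) (S'.filter fun e => prop e = p)
  have hi1 : ((S.filter fun e => prop e = p) ∩ (S'.filter fun e => prop e = p)).card ≤
      (S.filter fun e => prop e = p).card :=
    Finset.card_le_card (inter_subset_left)
  have hi2 : ((S.filter fun e => prop e = p) ∩ (S'.filter fun e => prop e = p)).card ≤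
      (S'.filter fun e => prop e = p).card :=
    Finset.card_le_card (inter_subset_right)
  omega

/-- submodularity of `U ↦ capRank (Ends U)` -/
lemma fEnds_submod' (A B : Finset (Fin n)) :
    capRank prop c (Ends supp (A ∪ B)) + capRank prop c (Ends supp (A ∩ B)) ≤
      capRank prop c (Ends supp A) + capRank prop c (Ends supp B) := by
  have h1 : capRank prop c (Ends supp (A ∩ B)) ≤
      capRank prop c (Ends supp A ∩ Ends supp B) := by
    apply capRank_mono'
    intro e he
    simp only [Ends, mem_filter, mem_univ, true_and, mem_inter] at he ⊢
    exact ⟨he.mono (inter_subset_inter (le_refl _) inter_subset_left),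
      he.mono (inter_subset_inter (le_refl _) inter_subset_right)⟩
  calc capRank prop c (Ends supp (A ∪ B)) + capRank prop c (Ends supp (A ∩ B))
      ≤ capRank prop c (Ends supp A ∪ Ends supp B) +
        capRank prop c (Ends supp A ∩ Ends supp B) := by
        rw [ends_union']; omega
    _ ≤ _ := capRank_submod' prop c _ _

lemma indepW_subset' {A B : Finset (Fin n)} (hA : IndepW prop c supp A) (h : B ⊆ A) :
    IndepW prop c supp B := fun U hU =>
  hA U (Finset.mem_powerset.2 ((Finset.mem_powerset.1 hU).trans h))

lemma indepW_empty' : IndepW prop c supp (∅ : Finset (Fin n)) := by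
  intro U hU
  simp only [Finset.mem_powerset, Finset.subset_empty] at hU
  simp [hU]

lemma le_rkW' {T V : Finset (Fin n)} (hTV : T ⊆ V) (hT : IndepW prop c supp T) :
    T.card ≤ rkW prop c supp V :=
  Finset.le_sup (Finset.mem_filter.2 ⟨Finset.mem_powerset.2 hTV, hT⟩)

lemma exists_max_indep' (V : Finset (Fin n)) :
    ∃ T ⊆ V, IndepW prop c supp T ∧ T.card = rkW prop c supp V := by
  have hne : (V.powerset.filter fun T => IndepW prop c supp T).Nonempty :=
    ⟨∅, Finset.mem_filter.2 ⟨Finset.mem_powerset.2 (Finset.empty_subset _),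
      indepW_empty' prop c supp⟩⟩
  obtain ⟨T, hT, hTeq⟩ := Finset.exists_mem_eq_sup _ hne Finset.card
  rw [Finset.mem_filter, Finset.mem_powerset] at hT
  exact ⟨T, hT.1, hT.2, hTeq.symm⟩

lemma rkW_le_card' (V : Finset (Fin n)) : rkW prop c supp V ≤ V.card := by
  apply Finset.sup_le
  intro T hT
  rw [Finset.mem_filter, Finset.mem_powerset] at hT
  exact Finset.card_le_card hT.1

lemma indep_card_le_cap' {T : Finset (Fin n)} (hT : IndepW prop c supp T) :
    T.card ≤ capRank prop c (Ends supp T) :=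
  hT T (Finset.mem_powerset.2 (le_refl _))

lemma rkW_le_cap' (V : Finset (Fin n)) :
    rkW prop c supp V ≤ capRank prop c (Ends supp V) := by
  obtain ⟨T, hTV, hTI, hTc⟩ := exists_max_indep' prop c supp V
  rw [← hTc]
  exact (indep_card_le_cap' prop c supp hTI).trans
    (capRank_mono' prop c (ends_mono' supp hTV))

lemma rkW_subadd' {V A : Finset (Fin n)} :
    rkW prop c supp V ≤ rkW prop c supp A + rkW prop c supp (V \ A) := by
  obtain ⟨T, hTV, hTI, hTc⟩ := exists_max_indep' prop c supp V
  rw [← hTc]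
  have h1 : (T ∩ A).card ≤ rkW prop c supp A :=
    le_rkW' prop c supp inter_subset_right
      (indepW_subset' prop c supp hTI inter_subset_left)
  have h2 : (T \ A).card ≤ rkW prop c supp (V \ A) :=
    le_rkW' prop c supp (sdiff_subset_sdiff hTV (le_refl _))
      (indepW_subset' prop c supp hTI (sdiff_subset))
  have := Finset.card_inter_add_card_sdiff T A
  omega

/-- The hard direction of the Rado rank formula: the min is attained. -/
lemma rado_min' (V : Finset (Fin n)) :
    ∃ U ⊆ V, capRank prop c (Ends supp U) + (V \ U).card ≤ rkW prop c supp V := by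
  obtain ⟨T, hTV, hTI, hTc⟩ := exists_max_indep' prop c supp V
  -- key induction: for any A ⊆ V \ T there is Y ⊆ T with capRank (Ends (Y ∪ A)) ≤ |Y|
  have key : ∀ A : Finset (Fin n), A ⊆ V \ T →
      ∃ Y ⊆ T, capRank prop c (Ends supp (Y ∪ A)) ≤ Y.card := by
    intro A
    induction A using Finset.induction_on with
    | empty =>
      intro _
      refine ⟨∅, Finset.empty_subset _, ?_⟩
      have : Ends supp (∅ ∪ (∅ : Finset (Fin n))) = ∅ := by
        ext e; simp [Ends]
      rw [this]
      simp [capRank]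
    | @insert w A hwA ih =>
      intro hins
      have hA : A ⊆ V \ T := (Finset.subset_insert w A).trans hins
      have hw : w ∈ V \ T := hins (Finset.mem_insert_self w A)
      rw [Finset.mem_sdiff] at hw
      obtain ⟨Y, hYT, hYcap⟩ := ih hA
      -- insert w T is dependent
      have hdepwT : ¬ IndepW prop c supp (insert w T) := by
        intro hind
        have : (insert w T).card ≤ rkW prop c supp V :=
          le_rkW' prop c supp (Finset.insert_subset hw.1 hTV) hind
        rw [Finset.card_insert_of_notMem hw.2] at this
        omega
      rw [IndepW] at hdepwT
      push_neg at hdepwT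
      obtain ⟨C, hCmem, hCcard⟩ := hdepwT
      rw [Finset.mem_powerset] at hCmem
      have hwC : w ∈ C := by
        by_contra hwc
        have hCT : C ⊆ T := by
          intro x hx
          rcases Finset.mem_insert.1 (hCmem hx) with h | h
          · exact absurd (h ▸ hx) hwc
          · exact h
        exact absurd (hTI C (Finset.mem_powerset.2 hCT)) (not_le.2 hCcard)
      have hCeT : C.erase w ⊆ T := by
        intro x hx
        rw [Finset.mem_erase] at hx
        rcases Finset.mem_insert.1 (hCmem hx.2) with h | h
        · exact absurd h hx.1
        · exact h
      -- C.erase w is independent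
      have hCeI : (C.erase w).card ≤ capRank prop c (Ends supp (C.erase w)) :=
        indep_card_le_cap' prop c supp (indepW_subset' prop c supp hTI hCeT)
      have hCecard : (C.erase w).card + 1 = C.card := Finset.card_erase_add_one hwC
      have hfCe : capRank prop c (Ends supp (C.erase w)) ≤
          capRank prop c (Ends supp C) :=
        capRank_mono' prop c (ends_mono' supp (Finset.erase_subset _ _))
      refine ⟨Y ∪ C.erase w, Finset.union_subset hYT hCeT, ?_⟩
      -- set identity: (Y ∪ C.erase w) ∪ insert w A = (Y ∪ A) ∪ C
      have hsets : (Y ∪ C.erase w) ∪ insert w A = (Y ∪ A) ∪ C := by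
        ext x
        simp only [Finset.mem_union, Finset.mem_insert, Finset.mem_erase]
        constructor
        · rintro ((h | ⟨_, h⟩) | (h | h))
          · exact Or.inl (Or.inl h)
          · exact Or.inr h
          · exact Or.inr (h ▸ hwC)
          · exact Or.inl (Or.inr h)
        · rintro ((h | h) | h)
          · exact Or.inl (Or.inl h)
          · exact Or.inr (Or.inr h)
          · by_cases hxw : x = w
            · exact Or.inr (Or.inl hxw)
            · exact Or.inl (Or.inr ⟨hxw, h⟩)
      rw [hsets]
      -- submodularity
      have hsub := fEnds_submod' prop c supp (Y ∪ A) C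
      -- lower bound on intersection term
      have hYCe : Y ∩ C.erase w ⊆ (Y ∪ A) ∩ C := by
        intro x hx
        rw [Finset.mem_inter] at hx ⊢
        exact ⟨Finset.mem_union_left _ hx.1, Finset.mem_of_mem_erase hx.2⟩
      have hlow : (Y ∩ C.erase w).card ≤
          capRank prop c (Ends supp ((Y ∪ A) ∩ C)) := by
        refine le_trans ?_ (capRank_mono' prop c (ends_mono' supp hYCe))
        exact indep_card_le_cap' prop c supp
          (indepW_subset' prop c supp hTI (inter_subset_left.trans hYT))
      have hcardU := Finset.card_union_add_card_inter Y (C.erase w)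
      omega
  obtain ⟨Y, hYT, hYcap⟩ := key (V \ T) (le_refl _)
  refine ⟨Y ∪ (V \ T), Finset.union_subset (hYT.trans hTV) sdiff_subset, ?_⟩
  have hVU : V \ (Y ∪ (V \ T)) = T \ Y := by
    ext x
    simp only [Finset.mem_sdiff, Finset.mem_union]
    constructor
    · rintro ⟨hxV, hx⟩
      push_neg at hx
      rcases hx with ⟨hxY, hxT⟩
      exact ⟨by tauto, hxY⟩
    · rintro ⟨hxT, hxY⟩
      exact ⟨hTV hxT, by push_neg; exact ⟨hxY, fun _ => hxT⟩⟩
  rw [hVU]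
  have h1 : (T \ Y).card + Y.card = T.card := Finset.card_sdiff_add_card_eq_card hYT
  omega

end QFaux

/-- Lemma `Q_F` nonempty: let `W` be a capacity-ranked
generalized Wilson loop diagram in which every vertex supports at least one
propagator end, and let `F` be a connected dependent flat of `M(W)` of rank
strictly less than `rk(M(W))`.  Then some propagator `q` has restricted
capacity `c_F(q) = min(c(q), |End(F) ∩ E(q)|)` strictly less than `c(q)`. -/
theorem QF_nonempty
    (prop : E → P) (c : P → ℕ) (supp : E → Finset (Fin n))
    (hpos : ∀ p : P, 0 < c p)
    (hle : ∀ p : P, c p ≤ (Finset.univ.filter fun e => prop e = p).card)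
    (hsupp : ∀ e : E, (∃ i : Fin n, supp e = {i}) ∨
      ∃ i : Fin n, supp e = ({i, i + 1} : Finset (Fin n)))
    (hcapranked : rkW prop c supp Finset.univ = ∑ p : P, c p)
    (hallsupp : ∀ v : Fin n, ∃ e : E, v ∈ supp e)
    (F : Finset (Fin n))
    (hflat : FlatW prop c supp F)
    (hdep : ¬ IndepW prop c supp F)
    (hconn : ConnectedOnW prop c supp F)
    (hrk : rkW prop c supp F < rkW prop c supp Finset.univ) :
    ∃ q : P, min (c q) (((Ends supp F).filter fun e => prop e = q).card) < c q := by
  by_contra hQ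
  push_neg at hQ
  have hcF : capRank prop c (Ends supp F) = ∑ p : P, c p := by
    apply Finset.sum_congr rfl
    intro p _
    have := le_min_iff.1 (hQ p)
    exact min_eq_right this.2
  obtain ⟨U, hUF, hU⟩ := rado_min' prop c supp F
  rcases Finset.eq_empty_or_nonempty U with hUe | hUne
  · -- U = ∅ : F is independent, contradiction
    subst hUe
    have h0 : capRank prop c (Ends supp (∅ : Finset (Fin n))) = 0 := by
      have : Ends supp (∅ : Finset (Fin n)) = ∅ := by ext e; simp [Ends]
      simp [this, capRank]
    rw [h0, Finset.sdiff_empty] at hU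
    obtain ⟨T, hTF, hTI, hTc⟩ := exists_max_indep' prop c supp F
    have hTeq : T = F := Finset.eq_of_subset_of_card_le hTF (by omega)
    exact hdep (hTeq ▸ hTI)
  rcases Finset.eq_empty_or_nonempty (F \ U) with hFUe | hFUne
  · -- U = F : capRank (Ends F) ≤ rk F, contradiction with capacity-ranked
    have hFU : U = F :=
      Finset.Subset.antisymm hUF (fun x hx => by
        by_contra hxU
        exact absurd (Finset.mem_sdiff.2 ⟨hx, hxU⟩) (by rw [hFUe]; simp))
    rw [hFU, Finset.sdiff_self, Finset.card_empty, Nat.add_zero, hcF, ← hcapranked] at hU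
    omega
  · -- both nonempty: rank is additive on the partition, contradicting connectivity
    have h1 : rkW prop c supp U ≤ capRank prop c (Ends supp U) :=
      rkW_le_cap' prop c supp U
    have h2 : rkW prop c supp (F \ U) ≤ (F \ U).card :=
      rkW_le_card' prop c supp _
    have h3 : rkW prop c supp F ≤ rkW prop c supp U + rkW prop c supp (F \ U) :=
      rkW_subadd' prop c supp
    exact hconn U hUF hUne hFUne (by omega)
end

section
/- Let W be a capacity-ranked generalized Wilson loop diagram with non-crossing propagators. Then M(W) is a positroid, i.e., the set of bases of M(W) coincides with the set of bases determined by its Grassmann necklace under the Gale orders. -/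
open Finset

variable {n : ℕ} [NeZero n] {E P : Type*} [Fintype E] [DecidableEq E]
  [Fintype P] [DecidableEq P]

/-- A base of `M(W)`: a maximum-size independent set. -/
def IsBaseW (prop : E → P) (c : P → ℕ) (supp : E → Finset (Fin n))
    (B : Finset (Fin n)) : Prop :=
  IndepW prop c supp B ∧
    ∀ B' : Finset (Fin n), IndepW prop c supp B' → B'.card ≤ B.card

/-- The position of `x` in the linear order `<_i` on `Fin n` starting at `i`. -/
def shiftVal (i x : Fin n) : ℕ := ((x - i : Fin n) : ℕ)

/-- The Gale (dominance) order with respect to `<_i`: `A ≤_i B` iff for every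
threshold `x`, `B` has at most as many elements `≤_i x` as `A` does.  For sets
of equal size this is equivalent to the componentwise comparison of the sorted
lists `A^(j) ≤_i B^(j)`. -/
def GaleLE (i : Fin n) (A B : Finset (Fin n)) : Prop :=
  ∀ x : Fin n,
    (B.filter fun b => shiftVal i b ≤ shiftVal i x).card ≤
      (A.filter fun a => shiftVal i a ≤ shiftVal i x).card

/-- `I` is the `<_i`-lexicographically minimal base of `M(W)` (the `i`-th
Grassmann necklace element): for every other base `B`, the `<_i`-smallest
element where `I` and `B` differ lies in `I`. -/
def LexMinBaseW (prop : E → P) (c : P → ℕ) (supp : E → Finset (Fin n))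
    (i : Fin n) (I : Finset (Fin n)) : Prop :=
  IsBaseW prop c supp I ∧ ∀ B : Finset (Fin n), IsBaseW prop c supp B → B ≠ I →
    ∃ m ∈ I, m ∉ B ∧ ∀ x : Fin n, shiftVal i x < shiftVal i m → (x ∈ I ↔ x ∈ B)

/-- The support of a position on the cyclically ordered set
`C = {v_1, e_1, v_2, e_2, …, v_n, e_n}`, encoded as `Fin (2*n)` with even
positions the vertices and odd positions the edges: a vertex `v_i` has support
`{i}` and an edge `e_i` has support `{i, i+1}` (cyclically). -/
def posSupp (x : Fin (2 * n)) : Finset (Fin n) :=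
  if x.val % 2 = 0 then {⟨x.val / 2, by have := x.isLt; omega⟩}
  else {⟨x.val / 2, by have := x.isLt; omega⟩,
        ⟨x.val / 2, by have := x.isLt; omega⟩ + 1}

/-- `a, b, c, d` appear in this strict cyclic order around `Fin m`. -/
def cyc4 {m : ℕ} (a b c d : Fin m) : Prop :=
  0 < ((b - a : Fin m) : ℕ) ∧ ((b - a : Fin m) : ℕ) < ((c - a : Fin m) : ℕ) ∧
    ((c - a : Fin m) : ℕ) < ((d - a : Fin m) : ℕ)

/-- Two propagators `p` and `q` cross: either there are ends `a, b` of `p` and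
`c', d` of `q` with `a < c' < b < d < a` in the cyclic order of vertices and
edges, or `p` and `q` share three distinct elements of
`{v_1, e_1, …, v_n, e_n}` as ends. -/
def Cross (prop : E → P) (pos : E → Fin (2 * n)) (p q : P) : Prop :=
  (∃ a b c' d : E, prop a = p ∧ prop b = p ∧ prop c' = q ∧ prop d = q ∧
      cyc4 (pos a) (pos c') (pos b) (pos d)) ∨
  (∃ x y z : Fin (2 * n), x ≠ y ∧ x ≠ z ∧ y ≠ z ∧
      ∀ w ∈ ({x, y, z} : Finset (Fin (2 * n))),
        (∃ a : E, prop a = p ∧ pos a = w) ∧ ∃ b : E, prop b = q ∧ pos b = w)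

/-!
`V` is independent in `M(W)` iff `#U ≤ capW U` for all `U ⊆ V`, where `capW U` is the capacity
of the ends meeting `U`. This function is monotone and submodular, so it induces a matroid,
and in a matroid the lexicographically minimal base `I_i` is greedy: it meets every initial
segment `[i, x]` of `<_i` in `rk [i, x]` elements. Hence every base is Gale-above every `I_i`.

Conversely, let `#B = ∑ p, c p` with `#(B ∩ [i, x]) ≤ rk [i, x]` for all `i, x`, and let `U ⊆ B`
be minimal with `capW U < #U`. The complement of a gap of `U` (a maximal cyclic interval avoiding
`U`) is an initial segment of `<_u`, `u` the vertex of `U` after the gap; this bounds the capacity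
deficiency of the complement by the number of vertices of `B` in the gap. A propagator `q` with
spare capacity on `U` has all its ends that avoid `U` in one gap: ends in two gaps would cut `U`
into two sides, minimality of `U` forces an overfull propagator joining the sides, and it would
cross `q`. So the deficiency of `U` is at most the sum over the gaps, hence at most `#(B \ U)`,
which gives `#U ≤ capW U`.
-/

section Cyclic

variable {m : ℕ} {i x y z p q r : Fin m}

theorem shiftVal_lt (i x : Fin m) : shiftVal i x < m := (x - i).isLt

theorem shiftVal_eq_ite (i x : Fin m) :
    shiftVal i x = if (i : ℕ) ≤ x then (x : ℕ) - i else m + x - i := by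
  unfold shiftVal
  split_ifs with h
  · exact Fin.coe_sub_iff_le.2 h
  · exact Fin.coe_sub_iff_lt.2 (not_le.1 h)

theorem shiftVal_injective (i : Fin m) : Function.Injective (shiftVal i) := fun x y h => by
  rw [shiftVal_eq_ite, shiftVal_eq_ite] at h
  have := x.isLt
  have := y.isLt
  ext
  split_ifs at h <;> omega

theorem shiftVal_self (i : Fin m) : shiftVal i i = 0 := by simp [shiftVal_eq_ite]

theorem shiftVal_eq_zero_iff : shiftVal i x = 0 ↔ x = i := by
  rw [← shiftVal_self i, (shiftVal_injective i).eq_iff]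

theorem shiftVal_add_shiftVal (a b c : Fin m) :
    shiftVal a b + shiftVal b c = shiftVal a c ∨
      shiftVal a b + shiftVal b c = shiftVal a c + m := by
  simp only [shiftVal_eq_ite]
  split_ifs <;> omega

/-- `b` is one of `a - 1, a, a + 1`. -/
def IsNear (a b : Fin m) : Prop := shiftVal a b ≤ 1 ∨ shiftVal a b + 1 = m

theorem shiftVal_lt_iff_of_isNear (hz : IsNear z p) (hx : ¬ IsNear x p) (hy : ¬ IsNear y p) :
    0 < shiftVal x z ∧ shiftVal x z ≠ shiftVal x y ∧
      (shiftVal x z < shiftVal x y ↔ shiftVal x p < shiftVal x y) := by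
  unfold IsNear at *
  have := shiftVal_add_shiftVal x z p
  have := shiftVal_add_shiftVal x y p
  have := shiftVal_lt x z
  have := shiftVal_lt x y
  have := shiftVal_lt x p
  have := shiftVal_lt y p
  omega

theorem shiftVal_lt_of_isNear (hp : IsNear x p) (hq : IsNear y q) (hpy : ¬ IsNear y p)
    (hqx : ¬ IsNear x q) (hrx : ¬ IsNear x r) (hry : ¬ IsNear y r)
    (h : shiftVal p r < shiftVal p q) : shiftVal x r < shiftVal x y := by
  unfold IsNear at *
  have := shiftVal_add_shiftVal x p r
  have := shiftVal_add_shiftVal x p q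
  have := shiftVal_add_shiftVal x y q
  have := shiftVal_add_shiftVal x y r
  have := shiftVal_add_shiftVal x y p
  have := shiftVal_lt x r
  have := shiftVal_lt y p
  have := shiftVal_lt y q
  have := shiftVal_lt y r
  have := shiftVal_lt p q
  omega

theorem not_shiftVal_lt_of_shiftVal_lt (h : shiftVal y r < shiftVal y x) :
    ¬ shiftVal x r < shiftVal x y := by
  have := shiftVal_add_shiftVal x y r
  have := shiftVal_add_shiftVal x y x
  have := shiftVal_self x
  have := shiftVal_lt x r
  omega

end Cyclic

theorem Finset.exists_forall_lexMin {β : Type*} [DecidableEq β] (g : β → ℕ)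
    (hg : Function.Injective g) (𝓑 : Finset (Finset β)) (h𝓑 : 𝓑.Nonempty) :
    ∃ I ∈ 𝓑, ∀ B ∈ 𝓑, B ≠ I →
      ∃ m ∈ I, m ∉ B ∧ ∀ x, g x < g m → (x ∈ I ↔ x ∈ B) := by
  obtain ⟨I, hI, hmax⟩ :=
    𝓑.exists_max_image (fun B => toColex (B.image (OrderDual.toDual ∘ g))) h𝓑
  refine ⟨I, hI, fun B hB hne => ?_⟩
  obtain ⟨m, hm, hmin⟩ := (symmDiff I B).exists_min_image g (symmDiff_nonempty.2 hne.symm)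
  have hagree : ∀ x, g x < g m → (x ∈ I ↔ x ∈ B) := fun x hx => by
    by_contra hx'
    exact (hmin x (by rw [mem_symmDiff]; tauto)).not_gt hx
  rcases mem_symmDiff.1 hm with ⟨hmI, hmB⟩ | ⟨hmB, hmI⟩
  · exact ⟨m, hmI, hmB, hagree⟩
  -- `I` is colex-maximal, so some element of `I \ B` lies below `m ∈ B \ I`.
  obtain ⟨b, hb, hbB, hle⟩ := Colex.toColex_le_toColex.1 (hmax B hB) (mem_image_of_mem _ hmB)
    (by simpa [hg.eq_iff] using hmI)
  obtain ⟨m', hm'I, rfl⟩ := mem_image.1 hb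
  have hm'B : m' ∉ B := fun h => hbB (mem_image_of_mem _ h)
  rcases (OrderDual.toDual_le_toDual.1 hle).lt_or_eq with hlt | heq
  · exact absurd ((hagree m' hlt).1 hm'I) hm'B
  · exact absurd (hg heq ▸ hm'I) hmI

namespace InducedMatroid

section Polymatroid

variable {α : Type*}

def Indep (f : Finset α → ℕ) (V : Finset α) : Prop := ∀ U ⊆ V, #U ≤ f U

variable {f : Finset α → ℕ} {A B T U V X Y : Finset α} {b : α}

theorem Indep.subset (hV : Indep f V) (hUV : U ⊆ V) : Indep f U :=
  fun W hW => hV W (hW.trans hUV)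

theorem indep_empty : Indep f ∅ := fun U hU => by simp [subset_empty.mp hU]

theorem exists_minimal_of_not_indep (hB : ¬ Indep f B) :
    ∃ U ⊆ B, f U < #U ∧ ∀ V ⊂ U, #V ≤ f V := by
  classical
  simp only [Indep, not_forall, not_le] at hB
  obtain ⟨W, hWB, hW⟩ := hB
  obtain ⟨U, hU, hmin⟩ := (B.powerset.filter fun U => f U < #U).exists_min_image card
    ⟨W, mem_filter.2 ⟨mem_powerset.2 hWB, hW⟩⟩
  rw [mem_filter, mem_powerset] at hU
  refine ⟨U, hU.1, hU.2, fun V hVU => not_lt.1 fun hV => ?_⟩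
  have := hmin V (mem_filter.2 ⟨mem_powerset.2 (hVU.subset.trans hU.1), hV⟩)
  exact (card_lt_card hVU).not_ge this

variable [DecidableEq α]

structure IsPolymatroid (f : Finset α → ℕ) : Prop where
  mono : Monotone f
  submod : ∀ S T, f (S ∪ T) + f (S ∩ T) ≤ f S + f T
  empty : f ∅ = 0

theorem Indep.exists_max_tight (hf : IsPolymatroid f) (hA : Indep f A) :
    ∃ T ⊆ A, f T = #T ∧ ∀ U ⊆ A, f U = #U → U ⊆ T := by
  let T := (A.powerset.filter fun U => f U = #U).sup id
  have hT : T ⊆ A ∧ f T = #T := by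
    refine sup_induction (p := fun S => S ⊆ A ∧ f S = #S)
      ⟨empty_subset _, by simp [hf.empty]⟩
      (fun U ⟨hUA, hU⟩ V ⟨hVA, hV⟩ => ⟨union_subset hUA hVA, ?_⟩)
      fun U hU => by simpa using hU
    have := hA _ (union_subset hUA hVA)
    have := hA (U ∩ V) (inter_subset_left.trans hUA)
    have := hf.submod U V
    have := card_union_add_card_inter U V
    change f (U ∪ V) = #(U ∪ V)
    omega
  exact ⟨T, hT.1, hT.2, fun U hUA hU => le_sup (f := id) (by simpa using And.intro hUA hU)⟩

theorem Indep.exists_tight_of_not_indep_insert (hmono : Monotone f) (hA : Indep f A)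
    (hb : ¬ Indep f (insert b A)) : ∃ U ⊆ A, f U = #U ∧ f (insert b U) = f U := by
  simp only [Indep, not_forall, not_le] at hb
  obtain ⟨W, hWA, hW⟩ := hb
  have hbW : b ∈ W := by
    by_contra hbW
    refine absurd (hA W fun x hx => ?_) (not_le.2 hW)
    exact (mem_insert.1 (hWA hx)).resolve_left (ne_of_mem_of_not_mem hx hbW)
  have hUA : W.erase b ⊆ A := (erase_subset_erase b hWA).trans (erase_insert_subset b A)
  have h1 := hA _ hUA
  have h2 := hmono (erase_subset b W)
  have h3 := card_erase_add_one hbW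
  refine ⟨W.erase b, hUA, by omega, ?_⟩
  rw [insert_erase hbW]
  omega

theorem IsPolymatroid.insert_eq_of_subset (hf : IsPolymatroid f) (hUY : U ⊆ Y) (hbY : b ∉ Y)
    (hb : f (insert b U) = f U) : f (insert b Y) = f Y := by
  have h := hf.submod Y (insert b U)
  rw [union_insert, union_eq_left.2 hUY,
    inter_insert_of_notMem hbY, inter_eq_right.2 hUY] at h
  exact le_antisymm (by omega) (hf.mono (subset_insert b Y))

theorem IsPolymatroid.union_eq_of_forall_insert_eq (hf : IsPolymatroid f)
    (h : ∀ b ∈ X, ∃ U ⊆ T, f (insert b U) = f U) : f (T ∪ X) = f T := by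
  induction X using Finset.induction_on with
  | empty => simp
  | insert b X _ ih =>
    have ih := ih fun b' hb' => h b' (mem_insert_of_mem hb')
    rw [union_insert]
    by_cases hb : b ∈ T ∪ X
    · rw [insert_eq_of_mem hb, ih]
    obtain ⟨U, hUT, hU⟩ := h b (mem_insert_self b X)
    rw [hf.insert_eq_of_subset (hUT.trans subset_union_left) hb hU, ih]

/-- The union `T` of all tight subsets of `A` is tight and every `b ∈ B \ A` lies in its closure,
so the independent set `(B ∩ T) ∪ (B \ A)` has at most `#T` elements. -/
theorem Indep.exists_insert_of_card_lt (hf : IsPolymatroid f) (hA : Indep f A) (hB : Indep f B)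
    (hlt : #A < #B) : ∃ b ∈ B, b ∉ A ∧ Indep f (insert b A) := by
  by_contra! hcon
  obtain ⟨T, hTA, hT, hTmax⟩ := hA.exists_max_tight hf
  have hspan : f (T ∪ (B \ A)) = f T := hf.union_eq_of_forall_insert_eq fun b hb => by
    obtain ⟨U, hUA, hU, hbU⟩ := hA.exists_tight_of_not_indep_insert hf.mono
      (hcon b (mem_sdiff.1 hb).1 (mem_sdiff.1 hb).2)
    exact ⟨U, hTmax U hUA hU, hbU⟩
  have hdisj : Disjoint (B ∩ T) (B \ A) :=
    disjoint_left.2 fun x hx hx' => (mem_sdiff.1 hx').2 (hTA (mem_inter.1 hx).2)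
  have hBT : #(B ∩ T) + #(B \ A) ≤ #T := calc
    #(B ∩ T) + #(B \ A) = #((B ∩ T) ∪ (B \ A)) := (card_union_of_disjoint hdisj).symm
    _ ≤ f ((B ∩ T) ∪ (B \ A)) := hB _ (union_subset inter_subset_left sdiff_subset)
    _ ≤ f (T ∪ (B \ A)) := hf.mono (union_subset_union inter_subset_right subset_rfl)
    _ = #T := hspan.trans hT
  have hTB := card_inter_add_card_sdiff T B
  have hTBA := card_le_card (sdiff_subset_sdiff hTA (subset_refl B))
  rw [inter_comm] at hTB
  exact hlt.not_ge (card_sdiff_le_card_sdiff_iff.1 (by omega))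

end Polymatroid

section Rank

variable {α : Type*} {f : Finset α → ℕ} {A C T V : Finset α}

open Classical in
noncomputable def rk (f : Finset α → ℕ) (V : Finset α) : ℕ :=
  (V.powerset.filter (Indep f)).sup card

theorem Indep.card_le_rk (hT : Indep f T) (hTV : T ⊆ V) : #T ≤ rk f V := by
  classical
  exact le_sup (f := card) (mem_filter.2 ⟨mem_powerset.2 hTV, hT⟩)

theorem exists_indep_card_eq_rk (V : Finset α) : ∃ T ⊆ V, Indep f T ∧ #T = rk f V := by
  classical
  obtain ⟨T, hT, hTeq⟩ := exists_mem_eq_sup (V.powerset.filter (Indep f))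
    ⟨∅, mem_filter.2 ⟨empty_mem_powerset V, indep_empty⟩⟩ card
  rw [mem_filter, mem_powerset] at hT
  exact ⟨T, hT.1, hT.2, hTeq.symm⟩

theorem rk_le (hmono : Monotone f) (V : Finset α) : rk f V ≤ f V := by
  obtain ⟨T, hTV, hT, hTcard⟩ := exists_indep_card_eq_rk (f := f) V
  exact hTcard ▸ (hT T subset_rfl).trans (hmono hTV)

variable [DecidableEq α]

theorem Indep.exists_insert_of_card_lt_rk (hf : IsPolymatroid f) (hA : Indep f A)
    (hlt : #A < rk f V) : ∃ y ∈ V, y ∉ A ∧ Indep f (insert y A) := by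
  obtain ⟨T, hTV, hT, hTcard⟩ := exists_indep_card_eq_rk (f := f) V
  obtain ⟨y, hyT, hyA, hy⟩ := hA.exists_insert_of_card_lt hf hT (hTcard ▸ hlt)
  exact ⟨y, hTV hyT, hyA, hy⟩

theorem Indep.exists_superset_card_eq_rk [Fintype α] (hf : IsPolymatroid f) (hC : Indep f C) :
    ∃ D, C ⊆ D ∧ Indep f D ∧ #D = rk f univ := by
  classical
  obtain ⟨D, hD, hmax⟩ :=
    (univ.powerset.filter fun D => C ⊆ D ∧ Indep f D).exists_max_image card
    ⟨C, by simpa using hC⟩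
  simp only [mem_filter, mem_powerset, subset_univ, true_and] at hD hmax
  refine ⟨D, hD.1, hD.2, le_antisymm (hD.2.card_le_rk (subset_univ D)) (not_lt.1 fun hlt => ?_)⟩
  obtain ⟨y, -, hyD, hy⟩ := hD.2.exists_insert_of_card_lt_rk hf hlt
  have := hmax _ ⟨hD.1.trans (subset_insert y D), hy⟩
  rw [card_insert_of_notMem hyD] at this
  omega

end Rank

section Base

variable {α : Type*} [Fintype α] {f : Finset α → ℕ} {B : Finset α}

def IsBase (f : Finset α → ℕ) (B : Finset α) : Prop :=
  Indep f B ∧ ∀ B', Indep f B' → #B' ≤ #B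

theorem isBase_iff : IsBase f B ↔ Indep f B ∧ #B = rk f univ := by
  obtain ⟨T, -, hT, hTcard⟩ := exists_indep_card_eq_rk (f := f) univ
  refine ⟨fun h => ⟨h.1, le_antisymm (h.1.card_le_rk (subset_univ B)) (hTcard ▸ h.2 T hT)⟩,
    fun h => ⟨h.1, fun B' hB' => h.2 ▸ hB'.card_le_rk (subset_univ B')⟩⟩

theorem exists_isBase (f : Finset α → ℕ) : ∃ B, IsBase f B := by
  obtain ⟨T, -, hT, hTcard⟩ := exists_indep_card_eq_rk (f := f) univ
  exact ⟨T, isBase_iff.2 ⟨hT, hTcard⟩⟩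

end Base

section Necklace

variable {n : ℕ} {f : Finset (Fin n) → ℕ} {i : Fin n} {B I : Finset (Fin n)}

def IsLexMinBase (f : Finset (Fin n) → ℕ) (i : Fin n) (I : Finset (Fin n)) : Prop :=
  IsBase f I ∧ ∀ B, IsBase f B → B ≠ I →
    ∃ m ∈ I, m ∉ B ∧ ∀ x : Fin n, shiftVal i x < shiftVal i m → (x ∈ I ↔ x ∈ B)

theorem exists_isLexMinBase (f : Finset (Fin n) → ℕ) (i : Fin n) :
    ∃ I, IsLexMinBase f i I := by
  classical
  obtain ⟨B, hB⟩ := exists_isBase f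
  obtain ⟨I, hI, hmin⟩ := (univ.filter (IsBase f)).exists_forall_lexMin (shiftVal i)
    (shiftVal_injective i) ⟨B, by simpa using hB⟩
  exact ⟨I, (mem_filter.1 hI).2, fun B hB => hmin B (mem_filter.2 ⟨mem_univ _, hB⟩)⟩

def arc (i x : Fin n) : Finset (Fin n) := univ.filter fun y => shiftVal i y ≤ shiftVal i x

theorem filter_shiftVal_le_eq_inter_arc (s : Finset (Fin n)) (x : Fin n) :
    s.filter (fun y => shiftVal i y ≤ shiftVal i x) = s ∩ arc i x := by
  ext
  simp [arc]

theorem IsLexMinBase.card_inter_arc_eq_rk (hf : IsPolymatroid f) (hI : IsLexMinBase f i I)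
    (x : Fin n) : #(I ∩ arc i x) = rk f (arc i x) := by
  have hA : Indep f (I ∩ arc i x) := hI.1.1.subset inter_subset_left
  refine le_antisymm (hA.card_le_rk inter_subset_right) (not_lt.1 fun hlt => ?_)
  obtain ⟨y, hyarc, hyA, hy⟩ := hA.exists_insert_of_card_lt_rk hf hlt
  obtain ⟨D, hAD, hD, hDcard⟩ := hy.exists_superset_card_eq_rk hf
  have hyD : y ∈ D := hAD (mem_insert_self y _)
  have hyI : y ∉ I := fun h => hyA (mem_inter.2 ⟨h, hyarc⟩)
  obtain ⟨m, hmI, hmD, hagree⟩ :=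
    hI.2 D (isBase_iff.2 ⟨hD, hDcard⟩) (ne_of_mem_of_not_mem' hyD hyI)
  have hxm : shiftVal i x < shiftVal i m := not_le.1 fun h =>
    hmD (hAD (mem_insert_of_mem (mem_inter.2 ⟨hmI, by simpa [arc] using h⟩)))
  have hym : shiftVal i y < shiftVal i m := lt_of_le_of_lt (by simpa [arc] using hyarc) hxm
  exact hyI ((hagree y hym).2 hyD)

theorem IsLexMinBase.card_inter_arc_le (hf : IsPolymatroid f) (hI : IsLexMinBase f i I)
    (hB : Indep f B) (x : Fin n) : #(B ∩ arc i x) ≤ #(I ∩ arc i x) :=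
  hI.card_inter_arc_eq_rk hf x ▸ (hB.subset inter_subset_left).card_le_rk inter_subset_right

end Necklace

end InducedMatroid

section Positions

variable {n : ℕ}

theorem Fin.val_add_one_eq_ite [NeZero n] (k : Fin n) :
    ((k + 1 : Fin n) : ℕ) = if (k : ℕ) + 1 = n then 0 else (k : ℕ) + 1 := by
  have := k.isLt
  rw [Fin.val_add, Fin.val_one']
  rcases Nat.lt_or_ge 1 n with h1 | h1
  · rw [Nat.mod_eq_of_lt h1]
    split_ifs with h
    · rw [h, Nat.mod_self]
    · exact Nat.mod_eq_of_lt (by omega)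
  · obtain rfl : n = 1 := by omega
    simp [Fin.fin_one_eq_zero k]

def pv (v : Fin n) : Fin (2 * n) := ⟨2 * v, by omega⟩

@[simp] theorem val_pv (v : Fin n) : (pv v : ℕ) = 2 * v := rfl

theorem shiftVal_pv (v w : Fin n) : shiftVal (pv v) (pv w) = 2 * shiftVal v w := by
  simp only [shiftVal_eq_ite, pv]
  split_ifs <;> omega

variable [NeZero n]

theorem mem_posSupp_iff {v : Fin n} {z : Fin (2 * n)} : v ∈ posSupp z ↔ IsNear z (pv v) := by
  have := v.isLt
  have := z.isLt
  have hs := shiftVal_eq_ite z (pv v)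
  rw [val_pv] at hs
  unfold posSupp IsNear
  split_ifs <;> simp only [mem_singleton, mem_insert, Fin.ext_iff, Fin.val_add_one_eq_ite] <;>
    split_ifs at hs ⊢ <;> omega

theorem posSupp_eq (z : Fin (2 * n)) : ∃ k, posSupp z = {k} ∨ posSupp z = {k, k + 1} := by
  unfold posSupp
  split_ifs
  exacts [⟨_, Or.inl rfl⟩, ⟨_, Or.inr rfl⟩]

theorem posSupp_nonempty (z : Fin (2 * n)) : (posSupp z).Nonempty := by
  obtain ⟨k, h | h⟩ := posSupp_eq z <;> simp [h]

end Positions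

namespace WilsonLoop

open InducedMatroid

section Meets

variable {n : ℕ} {E P : Type*} [Fintype E] [DecidableEq P]

def meets (prop : E → P) (supp : E → Finset (Fin n)) (p : P) (S : Finset (Fin n)) : Finset E :=
  (Ends supp S).filter fun e => prop e = p

variable {prop : E → P} {supp : E → Finset (Fin n)} {p : P} {e : E} {S T : Finset (Fin n)}

@[simp] theorem mem_meets :
    e ∈ meets prop supp p S ↔ prop e = p ∧ (supp e ∩ S).Nonempty := by
  simp [meets, Ends, and_comm]

theorem meets_mono (h : S ⊆ T) : meets prop supp p S ⊆ meets prop supp p T := fun e => by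
  simp only [mem_meets]
  exact fun ⟨hp, he⟩ => ⟨hp, he.mono (inter_subset_inter_left h)⟩

theorem meets_union [DecidableEq E] :
    meets prop supp p (S ∪ T) = meets prop supp p S ∪ meets prop supp p T := by
  ext e
  simp [inter_union_distrib_left, and_or_left]

end Meets

section Capacity

variable {n : ℕ} {E P : Type*} [Fintype E] [Fintype P] [DecidableEq P]
  (prop : E → P) (c : P → ℕ) (supp : E → Finset (Fin n))

def capW (S : Finset (Fin n)) : ℕ := capRank prop c (Ends supp S)

def deficiency (S : Finset (Fin n)) : ℕ := ∑ p, (c p - #(meets prop supp p S))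

variable {prop c supp} {A A' : Finset (Fin n)}

theorem capW_eq_sum (S : Finset (Fin n)) :
    capW prop c supp S = ∑ p, min #(meets prop supp p S) (c p) := rfl

theorem capW_add_deficiency (S : Finset (Fin n)) :
    capW prop c supp S + deficiency prop c supp S = ∑ p, c p := by
  rw [capW_eq_sum, deficiency, ← sum_add_distrib]
  exact sum_congr rfl fun p _ => by omega

theorem indepW_iff {V : Finset (Fin n)} : IndepW prop c supp V ↔ Indep (capW prop c supp) V := by
  simp [IndepW, Indep, capW]

theorem rkW_eq_rk (V : Finset (Fin n)) : rkW prop c supp V = rk (capW prop c supp) V := by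
  unfold rkW rk
  congr 1
  ext
  simp [indepW_iff]

theorem isBaseW_iff {B : Finset (Fin n)} :
    IsBaseW prop c supp B ↔ IsBase (capW prop c supp) B := by
  simp [IsBaseW, IsBase, indepW_iff]

theorem lexMinBaseW_iff {i : Fin n} {I : Finset (Fin n)} :
    LexMinBaseW prop c supp i I ↔ IsLexMinBase (capW prop c supp) i I := by
  simp [LexMinBaseW, IsLexMinBase, isBaseW_iff]

variable [DecidableEq E]

theorem isPolymatroid_capW : IsPolymatroid (capW prop c supp) where
  mono S T h := sum_le_sum fun p _ => min_le_min_right _ (card_le_card (meets_mono h))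
  submod S T := by
    simp only [capW_eq_sum, ← sum_add_distrib]
    refine sum_le_sum fun p _ => ?_
    have h1 := card_union_add_card_inter (meets prop supp p S) (meets prop supp p T)
    have h2 : meets prop supp p (S ∩ T) ⊆ meets prop supp p S := meets_mono inter_subset_left
    have h3 : meets prop supp p (S ∩ T) ⊆ meets prop supp p T := meets_mono inter_subset_right
    have h4 := card_le_card (subset_inter h2 h3)
    have h5 := card_le_card h2
    have h6 := card_le_card h3
    rw [meets_union]
    omega
  empty := by simp [capW_eq_sum, meets, Ends]

theorem capW_union_eq_add (hsep : ∀ p, Disjoint (meets prop supp p A) (meets prop supp p A'))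
    (hcap : ∀ p, (meets prop supp p A).Nonempty → (meets prop supp p A').Nonempty →
      #(meets prop supp p (A ∪ A')) ≤ c p) :
    capW prop c supp (A ∪ A') = capW prop c supp A + capW prop c supp A' := by
  simp only [capW_eq_sum, ← sum_add_distrib]
  refine sum_congr rfl fun p _ => ?_
  rw [meets_union, card_union_of_disjoint (hsep p)]
  rcases (meets prop supp p A).eq_empty_or_nonempty with h | h
  · simp [h]
  rcases (meets prop supp p A').eq_empty_or_nonempty with h' | h'
  · simp [h']
  have := hcap p h h'
  rw [meets_union, card_union_of_disjoint (hsep p)] at this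
  omega

end Capacity

section Connector

variable {n : ℕ} {E P : Type*} [Fintype E] [DecidableEq E] [Fintype P] [DecidableEq P]
  {prop : E → P} {c : P → ℕ} {supp : E → Finset (Fin n)} {U : Finset (Fin n)}

/-- Otherwise `capW` is additive over the two sides, contradicting `capW U < #U`. -/
theorem exists_connector_of_minimal (hU : capW prop c supp U < #U)
    (hmin : ∀ V ⊂ U, #V ≤ capW prop c supp V) (side : Fin n → Prop) [DecidablePred side]
    (h₁ : ∃ u ∈ U, side u) (h₂ : ∃ u ∈ U, ¬ side u)
    (hsep : ∀ e, ∀ v ∈ supp e, ∀ v' ∈ supp e, v ∈ U → v' ∈ U →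
      side v → side v') :
    ∃ p, (meets prop supp p (U.filter side)).Nonempty ∧
      (meets prop supp p (U.filter fun v => ¬ side v)).Nonempty ∧
      c p < #(meets prop supp p U) := by
  by_contra! hcon
  obtain ⟨u₁, hu₁, hs₁⟩ := h₁
  obtain ⟨u₂, hu₂, hs₂⟩ := h₂
  have hU' := filter_union_filter_not_eq side U
  have hdisj : ∀ p, Disjoint (meets prop supp p (U.filter side))
      (meets prop supp p (U.filter fun v => ¬ side v)) := fun p => by
    refine disjoint_left.2 fun e he he' => ?_
    obtain ⟨v, hv⟩ := (mem_meets.1 he).2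
    obtain ⟨v', hv'⟩ := (mem_meets.1 he').2
    simp only [mem_inter, mem_filter] at hv hv'
    exact hv'.2.2 (hsep e v hv.1 v' hv'.1 hv.2.1 hv'.2.1 hv.2.2)
  have hsplit := capW_union_eq_add (c := c) hdisj fun p h h' => by rw [hU']; exact hcon p h h'
  rw [hU'] at hsplit
  have hA := hmin _ (filter_ssubset.2 ⟨u₂, hu₂, hs₂⟩)
  have hA' := hmin (U.filter fun v => ¬ side v)
    (filter_ssubset.2 ⟨u₁, hu₁, not_not.2 hs₁⟩)
  have := card_filter_add_card_filter_not (s := U) side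
  omega

end Connector

section Gaps

variable {n : ℕ} {U : Finset (Fin n)} {nxt : Fin n → Fin n} {v w w₁ w₂ : Fin n}

def IsFirstAfter (U : Finset (Fin n)) (nxt : Fin n → Fin n) : Prop :=
  ∀ v, nxt v ∈ U ∧ ∀ w ∈ U, shiftVal v (nxt v) ≤ shiftVal v w

/-- The run of vertices outside `U` just before `u`; it is empty unless `u ∈ U`. -/
def gap (U : Finset (Fin n)) (nxt : Fin n → Fin n) (u : Fin n) : Finset (Fin n) :=
  univ.filter fun v => v ∉ U ∧ nxt v = u

theorem nxt_eq_of_shiftVal_lt (hnxt : IsFirstAfter U nxt)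
    (h : shiftVal v w < shiftVal v (nxt v)) : nxt w = nxt v := by
  apply shiftVal_injective w
  have := (hnxt w).2 _ (hnxt v).1
  have := (hnxt v).2 _ (hnxt w).1
  have := shiftVal_add_shiftVal v w (nxt v)
  have := shiftVal_add_shiftVal v w (nxt w)
  have := shiftVal_lt w (nxt v)
  have := shiftVal_lt w (nxt w)
  omega

theorem shiftVal_nxt_lt_of_nxt_ne (hnxt : IsFirstAfter U nxt) (hw₂ : w₂ ∉ U)
    (hne : nxt w₁ ≠ nxt w₂) : shiftVal w₁ (nxt w₁) < shiftVal w₁ w₂ := by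
  by_contra! h
  rcases h.lt_or_eq with h | h
  · exact hne (nxt_eq_of_shiftVal_lt hnxt h).symm
  · exact hw₂ (shiftVal_injective w₁ h ▸ (hnxt w₁).1)

theorem exists_eq_arc {S : Finset (Fin n)} {i : Fin n} (hi : i ∈ S)
    (hS : ∀ y ∈ S, ∀ y', shiftVal i y' ≤ shiftVal i y → y' ∈ S) :
    ∃ x, S = arc i x := by
  obtain ⟨x, hx, hmax⟩ := S.exists_max_image (shiftVal i) ⟨i, hi⟩
  exact ⟨x, ext fun y => ⟨fun hy => by simp [arc, hmax y hy],
    fun hy => hS x hx y (by simpa [arc] using hy)⟩⟩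

theorem exists_compl_gap_eq_arc (hnxt : IsFirstAfter U nxt) (u : Fin n) :
    ∃ x, univ \ gap U nxt u = arc u x := by
  refine exists_eq_arc (by simpa [gap] using fun hu h => hu (h ▸ (hnxt u).1))
    fun y hy y' hy' => ?_
  simp only [gap, mem_sdiff, mem_univ, mem_filter, true_and] at hy ⊢
  rintro ⟨hy'U, rfl⟩
  have hy'u : shiftVal (nxt y') y' ≠ 0 :=
    fun h => hy'U (shiftVal_eq_zero_iff.1 h ▸ (hnxt y').1)
  have hlt : shiftVal y' y < shiftVal y' (nxt y') := by
    have := shiftVal_add_shiftVal (nxt y') y' y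
    have := shiftVal_add_shiftVal (nxt y') y' (nxt y')
    have := shiftVal_self (nxt y')
    have := shiftVal_lt (nxt y') y
    have := shiftVal_lt y' y
    omega
  exact hy ⟨fun hyU => ((hnxt y').2 y hyU).not_gt hlt, nxt_eq_of_shiftVal_lt hnxt hlt⟩

variable [NeZero n]

theorem nxt_add_one (hnxt : IsFirstAfter U nxt) {k : Fin n} (hk : k ∉ U) (hk1 : k + 1 ∉ U) :
    nxt (k + 1) = nxt k := by
  apply nxt_eq_of_shiftVal_lt hnxt
  have h1 : shiftVal k (k + 1) ≤ 1 := by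
    rw [shiftVal_eq_ite, Fin.val_add_one_eq_ite]
    split_ifs <;> omega
  have h2 : shiftVal k (nxt k) ≠ 0 := fun h => hk (shiftVal_eq_zero_iff.1 h ▸ (hnxt k).1)
  have h3 : shiftVal k (nxt k) ≠ shiftVal k (k + 1) :=
    fun h => hk1 (shiftVal_injective k h ▸ (hnxt k).1)
  omega

theorem nxt_eq_of_mem_posSupp (hnxt : IsFirstAfter U nxt) {z : Fin (2 * n)}
    (hv : v ∈ posSupp z) (hw : w ∈ posSupp z) (hz : Disjoint (posSupp z) U) :
    nxt v = nxt w := by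
  obtain ⟨k, h | h⟩ := posSupp_eq z
  · rw [h, mem_singleton] at hv hw
    rw [hv, hw]
  · rw [h] at hv hw hz
    simp only [disjoint_insert_left, disjoint_singleton_left] at hz
    have key : ∀ v ∈ ({k, k + 1} : Finset (Fin n)), nxt v = nxt k := by
      simp [nxt_add_one hnxt hz.1 hz.2]
    rw [key v hv, key w hw]

theorem shiftVal_pv_nxt_lt (hnxt : IsFirstAfter U nxt) {x y : Fin (2 * n)}
    (hx : Disjoint (posSupp x) U) (hy : Disjoint (posSupp y) U) (hw₁ : w₁ ∈ posSupp x)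
    (hw₂ : w₂ ∈ posSupp y) (hne : nxt w₁ ≠ nxt w₂) :
    shiftVal x (pv (nxt w₁)) < shiftVal x y := by
  have hu := (hnxt w₁).1
  refine shiftVal_lt_of_isNear (mem_posSupp_iff.1 hw₁) (mem_posSupp_iff.1 hw₂)
    (fun h => hne ?_) (fun h => hne ?_) (mt mem_posSupp_iff.2 (disjoint_right.1 hx hu))
    (mt mem_posSupp_iff.2 (disjoint_right.1 hy hu)) ?_
  · exact nxt_eq_of_mem_posSupp hnxt (mem_posSupp_iff.2 h) hw₂ hy
  · exact nxt_eq_of_mem_posSupp hnxt hw₁ (mem_posSupp_iff.2 h) hx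
  · simpa [shiftVal_pv] using shiftVal_nxt_lt_of_nxt_ne hnxt (disjoint_left.1 hy hw₂) hne

end Gaps

section Spread

variable {n : ℕ} [NeZero n] {E P : Type*} [Fintype E] [DecidableEq E] [Fintype P] [DecidableEq P]
  {prop : E → P} {c : P → ℕ} {pos : E → Fin (2 * n)} {U : Finset (Fin n)}
  {nxt : Fin n → Fin n}

/-- Otherwise the two ends cut `U` into two nonempty sides, and the propagator connecting the
sides given by `exists_connector_of_minimal` crosses `q`. -/
theorem nxt_eq_of_disjoint_posSupp (hnoncross : ∀ p q, p ≠ q → ¬ Cross prop pos p q)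
    (hU : capW prop c (fun e => posSupp (pos e)) U < #U)
    (hmin : ∀ V ⊂ U, #V ≤ capW prop c (fun e => posSupp (pos e)) V)
    (hnxt : IsFirstAfter U nxt)
    {q : P} (hq : #(meets prop (fun e => posSupp (pos e)) q U) < c q)
    {e₁ e₂ : E} (he₁ : prop e₁ = q) (he₂ : prop e₂ = q)
    (hf₁ : Disjoint (posSupp (pos e₁)) U) (hf₂ : Disjoint (posSupp (pos e₂)) U)
    {w₁ w₂ : Fin n} (hw₁ : w₁ ∈ posSupp (pos e₁))
    (hw₂ : w₂ ∈ posSupp (pos e₂)) :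
    nxt w₁ = nxt w₂ := by
  by_contra hne
  set x := pos e₁
  set y := pos e₂
  have hfar : ∀ v ∈ U, ¬ IsNear x (pv v) ∧ ¬ IsNear y (pv v) := fun v hv => by
    simp only [← mem_posSupp_iff]
    exact ⟨disjoint_right.1 hf₁ hv, disjoint_right.1 hf₂ hv⟩
  have hside : ∀ e, ∀ v ∈ posSupp (pos e), v ∈ U → 0 < shiftVal x (pos e) ∧
      shiftVal x (pos e) ≠ shiftVal x y ∧
      (shiftVal x (pos e) < shiftVal x y ↔ shiftVal x (pv v) < shiftVal x y) :=
    fun e v hv hvU =>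
      shiftVal_lt_iff_of_isNear (mem_posSupp_iff.1 hv) (hfar v hvU).1 (hfar v hvU).2
  have hgap₁ := shiftVal_pv_nxt_lt hnxt hf₁ hf₂ hw₁ hw₂ hne
  have hgap₂ := not_shiftVal_lt_of_shiftVal_lt
    (shiftVal_pv_nxt_lt hnxt hf₂ hf₁ hw₂ hw₁ (Ne.symm hne))
  obtain ⟨p, ⟨a, ha⟩, ⟨b, hb⟩, hp⟩ := exists_connector_of_minimal hU hmin
    (fun v => shiftVal x (pv v) < shiftVal x y)
    ⟨_, (hnxt w₁).1, hgap₁⟩ ⟨_, (hnxt w₂).1, hgap₂⟩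
    fun e v hv v' hv' hvU hv'U h => (hside e v' hv' hv'U).2.2.1 ((hside e v hv hvU).2.2.2 h)
  obtain ⟨hpa, va, hva⟩ := mem_meets.1 ha
  obtain ⟨hpb, vb, hvb⟩ := mem_meets.1 hb
  simp only [mem_inter, mem_filter] at hva hvb
  obtain ⟨ha₁, -, ha₂⟩ := hside a va hva.1 hva.2.1
  obtain ⟨-, hb₁, hb₂⟩ := hside b vb hvb.1 hvb.2.1
  refine hnoncross q p (by rintro rfl; omega)
    (Or.inl ⟨e₁, e₂, a, b, he₁, he₂, hpa, hpb, ?_⟩)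
  exact ⟨ha₁, ha₂.2 hva.2.2, lt_of_le_of_ne (not_lt.1 (mt hb₂.1 hvb.2.2)) hb₁.symm⟩

end Spread

section Master

variable {n : ℕ} {E P : Type*} [Fintype E] [DecidableEq E] [Fintype P] [DecidableEq P]
  {prop : E → P} {c : P → ℕ} {U B : Finset (Fin n)} {nxt : Fin n → Fin n}

theorem deficiency_compl_gap_le {supp : E → Finset (Fin n)} (hB : #B = ∑ p, c p)
    (harc : ∀ i x, #(B ∩ arc i x) ≤ rk (capW prop c supp) (arc i x))
    (hnxt : IsFirstAfter U nxt) (u : Fin n) :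
    deficiency prop c supp (univ \ gap U nxt u) ≤ #(B ∩ gap U nxt u) := by
  obtain ⟨x, hx⟩ := exists_compl_gap_eq_arc hnxt u
  have h1 := (harc u x).trans (rk_le isPolymatroid_capW.mono _)
  rw [← hx, inter_sdiff_left_comm, univ_inter] at h1
  have h2 := capW_add_deficiency (prop := prop) (c := c) (supp := supp) (univ \ gap U nxt u)
  have h3 := card_sdiff_add_card_inter B (gap U nxt u)
  omega

variable [NeZero n] {pos : E → Fin (2 * n)}

/-- All ends of `p` avoiding `U` lie in a single gap, whose complement `p` meets exactly as `U`
does. -/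
theorem sub_card_meets_le_sum
    (hle : ∀ p : P, c p ≤ (Finset.univ.filter fun e => prop e = p).card)
    (hnoncross : ∀ p q, p ≠ q → ¬ Cross prop pos p q)
    (hU : capW prop c (fun e => posSupp (pos e)) U < #U)
    (hmin : ∀ V ⊂ U, #V ≤ capW prop c (fun e => posSupp (pos e)) V)
    (hnxt : IsFirstAfter U nxt) (p : P) :
    c p - #(meets prop (fun e => posSupp (pos e)) p U) ≤
      ∑ u, (c p - #(meets prop (fun e => posSupp (pos e)) p (univ \ gap U nxt u))) := by
  rcases le_or_gt (c p) #(meets prop (fun e => posSupp (pos e)) p U) with h | h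
  · simp [Nat.sub_eq_zero_of_le h]
  have hfresh : ∀ e, prop e = p → e ∉ meets prop (fun e => posSupp (pos e)) p U →
      Disjoint (posSupp (pos e)) U := fun e he he' => by
    rw [disjoint_iff_inter_eq_empty, ← not_nonempty_iff_eq_empty]
    exact fun h => he' (mem_meets.2 ⟨he, h⟩)
  obtain ⟨e₀, he₀, he₀U⟩ := exists_mem_notMem_of_card_lt_card (h.trans_le (hle p))
  have hp₀ : prop e₀ = p := (mem_filter.1 he₀).2
  obtain ⟨w₀, hw₀⟩ := posSupp_nonempty (pos e₀)
  have hmeets : meets prop (fun e => posSupp (pos e)) p (univ \ gap U nxt (nxt w₀)) =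
      meets prop (fun e => posSupp (pos e)) p U := by
    refine (meets_mono fun v hv => by simp [gap, hv]).antisymm' fun e he => ?_
    by_contra heU
    obtain ⟨hpe, v, hv⟩ := mem_meets.1 he
    simp only [gap, mem_inter, mem_sdiff, mem_univ, mem_filter, true_and, not_and] at hv
    have hf := hfresh e hpe heU
    exact hv.2 (disjoint_left.1 hf hv.1) (nxt_eq_of_disjoint_posSupp hnoncross hU hmin hnxt
      h hpe hp₀ hf (hfresh e₀ hp₀ he₀U) hv.1 hw₀)
  rw [← hmeets]
  exact single_le_sum (f := fun u => c p - #(meets prop _ p (univ \ gap U nxt u)))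
    (fun _ _ => Nat.zero_le _) (mem_univ _)

theorem indep_of_card_inter_arc_le
    (hle : ∀ p : P, c p ≤ (Finset.univ.filter fun e => prop e = p).card)
    (hnoncross : ∀ p q, p ≠ q → ¬ Cross prop pos p q) (hB : #B = ∑ p, c p)
    (harc : ∀ i x, #(B ∩ arc i x) ≤ rk (capW prop c (fun e => posSupp (pos e))) (arc i x)) :
    Indep (capW prop c (fun e => posSupp (pos e))) B := by
  by_contra hdep
  obtain ⟨U, hUB, hU, hmin⟩ := exists_minimal_of_not_indep hdep
  choose nxt hnxt using fun v => U.exists_min_image (shiftVal v) (card_pos.1 (by omega))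
  have hgaps : ∑ u, #(B ∩ gap U nxt u) = #(B \ U) := by
    rw [card_eq_sum_card_fiberwise (f := nxt) (t := univ) fun _ _ => mem_univ _]
    refine sum_congr rfl fun u _ => congrArg card (ext fun v => ?_)
    simp [gap, and_assoc]
  have hdef : deficiency prop c (fun e => posSupp (pos e)) U ≤
      ∑ u, deficiency prop c (fun e => posSupp (pos e)) (univ \ gap U nxt u) := by
    unfold deficiency
    rw [sum_comm]
    exact sum_le_sum fun p _ => sub_card_meets_le_sum hle hnoncross hU hmin hnxt p
  have := sum_le_sum fun u (_ : u ∈ univ) => deficiency_compl_gap_le hB harc hnxt u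
  have := capW_add_deficiency (prop := prop) (c := c) (supp := fun e => posSupp (pos e)) U
  have := card_sdiff_add_card_inter B U
  rw [inter_eq_right.2 hUB] at this
  omega

end Master

end WilsonLoop

open InducedMatroid WilsonLoop

theorem noncrossing_capacityRanked_gwld_is_positroid_general
    (prop : E → P) (c : P → ℕ) (pos : E → Fin (2 * n))
    (hle : ∀ p : P, c p ≤ (Finset.univ.filter fun e => prop e = p).card)
    (hnoncross : ∀ p q : P, p ≠ q → ¬ Cross prop pos p q)
    (hcapranked :
      rkW prop c (fun e => posSupp (pos e)) Finset.univ = ∑ p : P, c p) :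
    ∀ B : Finset (Fin n),
      IsBaseW prop c (fun e => posSupp (pos e)) B ↔
        (B.card = rkW prop c (fun e => posSupp (pos e)) Finset.univ ∧
          ∀ (i : Fin n) (I : Finset (Fin n)),
            LexMinBaseW prop c (fun e => posSupp (pos e)) i I →
              GaleLE i I B) := by
  intro B
  have hf := isPolymatroid_capW (prop := prop) (c := c) (supp := fun e => posSupp (pos e))
  rw [rkW_eq_rk] at hcapranked
  simp only [isBaseW_iff, lexMinBaseW_iff, rkW_eq_rk, isBase_iff, GaleLE,
    filter_shiftVal_le_eq_inter_arc]
  constructor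
  · rintro ⟨hB, hcard⟩
    exact ⟨hcard, fun i I hI x => hI.card_inter_arc_le hf hB x⟩
  · rintro ⟨hcard, hGale⟩
    refine ⟨indep_of_card_inter_arc_le hle hnoncross (hcard.trans hcapranked)
      fun i x => ?_, hcard⟩
    obtain ⟨I, hI⟩ := exists_isLexMinBase (capW prop c fun e => posSupp (pos e)) i
    exact (hGale i I hI x).trans_eq (hI.card_inter_arc_eq_rk hf x)

/-- the Rado matroid `M(W)` of a capacity-ranked generalized
Wilson loop diagram with non-crossing propagators is a positroid: its set of
bases coincides with the set of `rk(M(W))`-element subsets Gale-dominating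
every Grassmann necklace element `I_i` in the order `≤_i`. -/
theorem noncrossing_capacityRanked_gwld_is_positroid
    (prop : E → P) (c : P → ℕ) (pos : E → Fin (2 * n))
    (hpos : ∀ p : P, 0 < c p)
    (hle : ∀ p : P, c p ≤ (Finset.univ.filter fun e => prop e = p).card)
    (hnoncross : ∀ p q : P, p ≠ q → ¬ Cross prop pos p q)
    (hcapranked :
      rkW prop c (fun e => posSupp (pos e)) Finset.univ = ∑ p : P, c p) :
    ∀ B : Finset (Fin n),
      IsBaseW prop c (fun e => posSupp (pos e)) B ↔
        (B.card = rkW prop c (fun e => posSupp (pos e)) Finset.univ ∧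
          ∀ (i : Fin n) (I : Finset (Fin n)),
            LexMinBaseW prop c (fun e => posSupp (pos e)) i I →
              GaleLE i I B) :=
  noncrossing_capacityRanked_gwld_is_positroid_general prop c pos hle hnoncross hcapranked
end

section
/- For any matroid M of rank k on the cyclically ordered ground set [n] with Grassmann necklace (I_1, ..., I_n), every basis B of M satisfies I_i ≤_i B in the Gale order for every i ∈ [n]. -/
open Finset

namespace RankMatroid

variable {α : Type*} [DecidableEq α] [Fintype α] (M : RankMatroid α)

def Indep (S : Finset α) : Prop := M.rk S = S.card

def IsBase (B : Finset α) : Prop := M.Indep B ∧ B.card = M.rk Finset.univ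

end RankMatroid

variable {n : ℕ}

/-- `I` is the `<_i`-lexicographically minimal base of `M` (the `i`-th
Grassmann necklace element): for every other base `B`, the `<_i`-smallest
element where `I` and `B` differ lies in `I`. -/
def LexMinBase (M : RankMatroid (Fin n)) (i : Fin n) (I : Finset (Fin n)) : Prop :=
  M.IsBase I ∧ ∀ B : Finset (Fin n), M.IsBase B → B ≠ I →
    ∃ m ∈ I, m ∉ B ∧ ∀ x : Fin n, shiftVal i x < shiftVal i m → (x ∈ I ↔ x ∈ B)

namespace RankMatroid

variable {α : Type*} [DecidableEq α] [Fintype α] (M : RankMatroid α)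

lemma rk_union_le_add_card (A S : Finset α) : M.rk (A ∪ S) ≤ M.rk A + S.card := by
  induction S using Finset.induction_on with
  | empty => simp
  | insert x s hx ih =>
    calc M.rk (A ∪ insert x s) = M.rk (insert x (A ∪ s)) := by rw [union_insert]
    _ ≤ M.rk (A ∪ s) + 1 := M.insert_le _ x
    _ ≤ M.rk A + (insert x s).card := by rw [card_insert_of_notMem hx]; omega

lemma rk_le_card (A : Finset α) : M.rk A ≤ A.card := by
  simpa [M.rk_empty] using M.rk_union_le_add_card ∅ A

lemma rk_le_rk_union (A S : Finset α) : M.rk A ≤ M.rk (A ∪ S) := by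
  induction S using Finset.induction_on with
  | empty => simp
  | insert x s _ ih =>
    calc M.rk A ≤ M.rk (A ∪ s) := ih
    _ ≤ M.rk (insert x (A ∪ s)) := M.rk_le_insert _ x
    _ = M.rk (A ∪ insert x s) := by rw [union_insert]

lemma rk_mono {A B : Finset α} (h : A ⊆ B) : M.rk A ≤ M.rk B := by
  simpa [union_eq_right.mpr h] using M.rk_le_rk_union A B

variable {M}

lemma Indep.subset {S T : Finset α} (hS : M.Indep S) (hTS : T ⊆ S) : M.Indep T := by
  have hS' : M.rk S = S.card := hS
  have hsplit : M.rk S ≤ M.rk T + (S \ T).card := by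
    simpa [union_sdiff_of_subset hTS] using M.rk_union_le_add_card T (S \ T)
  have := card_sdiff_add_card_eq_card hTS
  exact le_antisymm (M.rk_le_card T) (by omega)

lemma Indep.card_le_rk_of_subset {J P : Finset α} (hJ : M.Indep J) (hJP : J ⊆ P) :
    J.card ≤ M.rk P :=
  (hJ : M.rk J = J.card) ▸ M.rk_mono hJP

lemma rk_union_eq_of_forall_rk_insert_eq {A S : Finset α}
    (h : ∀ x ∈ S, M.rk (insert x A) = M.rk A) : M.rk (A ∪ S) = M.rk A := by
  induction S using Finset.induction_on with
  | empty => simp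
  | insert x s _ ih =>
    have hs : M.rk (A ∪ s) = M.rk A := ih fun y hy => h y (mem_insert_of_mem hy)
    have hx : M.rk (insert x A) = M.rk A := h x (mem_insert_self x s)
    have hunion : insert x A ∪ (A ∪ s) = A ∪ insert x s := by
      ext; simp only [mem_union, mem_insert]; tauto
    have hinter : M.rk A ≤ M.rk (insert x A ∩ (A ∪ s)) :=
      M.rk_mono fun y hy => mem_inter.mpr ⟨mem_insert_of_mem hy, mem_union_left _ hy⟩
    have hsub := M.submodular (insert x A) (A ∪ s)
    rw [hunion] at hsub
    exact le_antisymm (by omega) (M.rk_le_rk_union A _)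

lemma Indep.exists_insert_indep_of_rk_lt {J S : Finset α} (hJ : M.Indep J)
    (h : M.rk J < M.rk S) : ∃ x ∈ S, x ∉ J ∧ M.Indep (insert x J) := by
  by_contra! hcon
  have hJ' : M.rk J = J.card := hJ
  have hspan : ∀ x ∈ S, M.rk (insert x J) = M.rk J := by
    intro x hxS
    by_cases hxJ : x ∈ J
    · rw [insert_eq_self.mpr hxJ]
    · have hdep : M.rk (insert x J) ≠ (insert x J).card := hcon x hxS hxJ
      rw [card_insert_of_notMem hxJ] at hdep
      have := M.insert_le J x
      have := M.rk_le_insert J x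
      omega
  have := M.rk_le_rk_union S J
  rw [union_comm, rk_union_eq_of_forall_rk_insert_eq hspan] at this
  omega

lemma Indep.exists_isBase_superset {J : Finset α} (hJ : M.Indep J) :
    ∃ B, M.IsBase B ∧ J ⊆ B := by
  classical
  obtain ⟨B, hBmem, hBmax⟩ := exists_max_image
    (univ.filter fun B => M.Indep B ∧ J ⊆ B) card ⟨J, by simp [hJ]⟩
  simp only [mem_filter, mem_univ, true_and] at hBmem hBmax
  obtain ⟨hB, hJB⟩ := hBmem
  refine ⟨B, ⟨hB, le_antisymm ?_ ?_⟩, hJB⟩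
  · exact hB.card_le_rk_of_subset (subset_univ B)
  · by_contra! hlt
    rw [← (hB : M.rk B = B.card)] at hlt
    obtain ⟨x, -, hxB, hxi⟩ := hB.exists_insert_indep_of_rk_lt hlt
    have := hBmax _ ⟨hxi, hJB.trans (subset_insert x B)⟩
    rw [card_insert_of_notMem hxB] at this
    omega

end RankMatroid

variable {M : RankMatroid (Fin n)} {i : Fin n} {I : Finset (Fin n)}

/-- If the rank of `P` exceeded `|I ∩ P|`, then `I ∩ P` could be augmented inside `P` and
extended to a base, whose first difference from `I` lies in `P` and must be in that base. -/
lemma LexMinBase.rk_le_card_inter (hI : LexMinBase M i I) {P : Finset (Fin n)}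
    (hP : ∀ y ∈ P, ∀ z, shiftVal i z ≤ shiftVal i y → z ∈ P) :
    M.rk P ≤ (I ∩ P).card := by
  obtain ⟨hIbase, hlex⟩ := hI
  have hJ : M.Indep (I ∩ P) := hIbase.1.subset inter_subset_left
  by_contra! hlt
  rw [← (hJ : M.rk (I ∩ P) = (I ∩ P).card)] at hlt
  obtain ⟨y, hyP, hyJ, hyi⟩ := hJ.exists_insert_indep_of_rk_lt hlt
  obtain ⟨B, hB, hyJB⟩ := hyi.exists_isBase_superset
  have hyI : y ∉ I := fun hyI => hyJ (mem_inter.mpr ⟨hyI, hyP⟩)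
  have hyB : y ∈ B := hyJB (mem_insert_self y _)
  obtain ⟨m, hmI, hmB, hagree⟩ := hlex B hB (by rintro rfl; exact hyI hyB)
  have hmy : shiftVal i m ≤ shiftVal i y :=
    not_lt.mp fun hym => hyI ((hagree y hym).mpr hyB)
  exact hmB (hyJB (mem_insert_of_mem (mem_inter.mpr ⟨hmI, hP y hyP m hmy⟩)))

/-- for any matroid `M` on the cyclically ordered ground set
`[n]` with Grassmann necklace `(I_1, …, I_n)`, every basis `B` of `M` satisfies
`I_i ≤_i B` in the Gale order, for every `i`. -/
theorem necklace_gale_dominates_bases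
    (M : RankMatroid (Fin n)) (i : Fin n) (I B : Finset (Fin n))
    (hI : LexMinBase M i I) (hB : M.IsBase B) :
    GaleLE i I B := by
  intro x
  set P := univ.filter fun y => shiftVal i y ≤ shiftVal i x
  have hfilter (A : Finset (Fin n)) :
      A.filter (fun a => shiftVal i a ≤ shiftVal i x) = A ∩ P := by
    ext; simp [P]
  rw [hfilter, hfilter]
  calc (B ∩ P).card ≤ M.rk P :=
        (hB.1.subset inter_subset_left).card_le_rk_of_subset inter_subset_right
  _ ≤ (I ∩ P).card := hI.rk_le_card_inter fun y hy z hzy => by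
      simp only [P, mem_filter, mem_univ, true_and] at hy ⊢; omega
end
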